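/- arXiv:1410.8508 — 10 statements merged into one kernel-verified Lean document; each statement's English description precedes it below -/
import Mathlib

section
/- For parameters p,q ∈ (0,1) and positive integers R,L, define α = [p(1-q)q^R(1-(1-p)^L) + qp(1-p)^L(1-q^R)] / [(1-q)q^R(1-(1-p)^L) + p(1-p)^L(1-q^R)]. If q = 1/2, then α = 1/2 when p = 1/2, α < 1/2 when p < 1/2, and α > 1/2 when p > 1/2. -/
noncomputable def alpha (p q : ℝ) (R L : ℕ) : ℝ :=
  (p * ((1-q) * q^R * (1 - (1-p)^L)) + q * (p * (1-p)^L * (1 - q^R))) /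
    ((1-q) * q^R * (1 - (1-p)^L) + p * (1-p)^L * (1 - q^R))

theorem stmt0 (p q : ℝ) (R L : ℕ) (hp : p ∈ Set.Ioo (0:ℝ) 1) (hq : q = 1/2)
    (hR : 1 ≤ R) (hL : 1 ≤ L) :
    (p = 1/2 → alpha p q R L = 1/2) ∧
    (p < 1/2 → alpha p q R L < 1/2) ∧
    (1/2 < p → 1/2 < alpha p q R L) := by
  obtain ⟨hp0, hp1⟩ := hp
  subst hq
  have h2R : (0:ℝ) < (1/2:ℝ)^R := pow_pos (by linarith) _
  have h2R1 : ((1/2:ℝ))^R < 1 := pow_lt_one₀ (by norm_num) (by norm_num) (by omega)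
  have hqL : (1-p)^L < 1 := pow_lt_one₀ (by linarith) (by linarith) (by omega)
  have hqLpos : (0:ℝ) < (1-p)^L := pow_pos (by linarith) _
  have hD : 0 < ((1-(1/2:ℝ)) * (1/2)^R * (1 - (1-p)^L) + p * (1-p)^L * (1 - (1/2)^R)) := by
    nlinarith [mul_pos h2R (sub_pos.2 hqL), mul_pos (mul_pos hp0 hqLpos) (sub_pos.2 h2R1)]
  unfold alpha
  refine ⟨?_, ?_, ?_⟩
  · intro h; subst h
    rw [div_eq_iff (ne_of_gt hD)]; ring
  · intro h
    rw [div_lt_iff₀ hD]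
    nlinarith [mul_pos (mul_pos (sub_pos.2 h) h2R) (sub_pos.2 hqL)]
  · intro h
    rw [lt_div_iff₀ hD]
    nlinarith [mul_pos (mul_pos (sub_pos.2 h) h2R) (sub_pos.2 hqL)]
end

section
/- For fixed q ∈ (0,1/2) and integers R,L ≥ 1, the function p ↦ α(p,q,R,L) (with α as defined by α = [p(1-q)q^R(1-(1-p)^L) + qp(1-p)^L(1-q^R)] / [(1-q)q^R(1-(1-p)^L) + p(1-p)^L(1-q^R)]) has a unique critical point p₀ ∈ (1/2,1) with α(p₀) = 1/2, and moreover α(p) < 1/2 for p < p₀ and α(p) > 1/2 for p > p₀. -/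
/-!
Clearing the (positive) denominator, `α - 1/2` has the sign of
`g(p) = a (2p - 1)(1 - (1-p)^L) - b p (1-p)^L` with `a = (1-q)q^R > 0` and
`b = (1-2q)(1-q^R) > 0`. For `p ≤ 1/2` both terms of `g` are `≤ 0` and the second is `< 0`.
On `[1/2, 1]` the first product is strictly increasing and `p (1-p)^L = p(1-p) · (1-p)^(L-1)`
is decreasing, so `g` is strictly increasing there, from `g(1/2) < 0` to `g(1) = a > 0`;
its unique zero is `p₀`.
-/

open Set

theorem exists_sign_change_of_strictMonoOn {g : ℝ → ℝ} {c a b : ℝ} (hca : c < a) (hab : a ≤ b)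
    (hg : ContinuousOn g (Icc a b)) (hmono : StrictMonoOn g (Icc a b))
    (hneg : ∀ p ∈ Ioc c a, g p < 0) (hpos : 0 < g b) :
    ∃ p₀ ∈ Ioo a b, g p₀ = 0 ∧ (∀ p ∈ Ioc c b, p < p₀ → g p < 0) ∧
      (∀ p ∈ Ioc c b, p₀ < p → 0 < g p) := by
  obtain ⟨p₀, hp₀, hroot⟩ :=
    intermediate_value_Ioo hab hg ⟨hneg a ⟨hca, le_rfl⟩, hpos⟩
  have hp₀' : p₀ ∈ Icc a b := Ioo_subset_Icc_self hp₀
  refine ⟨p₀, hp₀, hroot, fun p hp hlt => ?_, fun p hp hlt => ?_⟩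
  · rcases le_or_gt p a with hpa | hap
    · exact hneg p ⟨hp.1, hpa⟩
    · exact hroot ▸ hmono ⟨hap.le, hp.2⟩ hp₀' hlt
  · exact hroot ▸ hmono hp₀' ⟨(hp₀.1.trans hlt).le, hp.2⟩ hlt

theorem antitoneOn_mul_one_sub_pow {n : ℕ} (hn : n ≠ 0) :
    AntitoneOn (fun p : ℝ => p * (1 - p) ^ n) (Icc (1/2) 1) := by
  obtain ⟨m, rfl⟩ := Nat.exists_eq_succ_of_ne_zero hn
  intro x hx y hy hxy
  have hquad : y * (1 - y) ≤ x * (1 - x) := by nlinarith [hx.1]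
  have hpow : (1 - y) ^ m ≤ (1 - x) ^ m := by gcongr; linarith [hy.2]
  calc y * (1 - y) ^ (m + 1) = y * (1 - y) * (1 - y) ^ m := by ring
    _ ≤ x * (1 - x) * (1 - x) ^ m :=
        mul_le_mul hquad hpow (pow_nonneg (by linarith [hy.2]) m) (by nlinarith [hx.1, hx.2])
    _ = x * (1 - x) ^ (m + 1) := by ring

theorem strictMonoOn_two_mul_sub_one_mul_one_sub_pow {n : ℕ} (hn : n ≠ 0) :
    StrictMonoOn (fun p : ℝ => (2 * p - 1) * (1 - (1 - p) ^ n)) (Icc (1/2) 1) := by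
  intro x hx y hy hxy
  have hpow : (1 - y) ^ n < (1 - x) ^ n := pow_lt_pow_left₀ (by linarith) (by linarith [hy.2]) hn
  have hx' : 0 ≤ 1 - (1 - x) ^ n := sub_nonneg.2 (pow_le_one₀ (by linarith [hx.2]) (by linarith [hx.1]))
  calc (2 * x - 1) * (1 - (1 - x) ^ n) ≤ (2 * y - 1) * (1 - (1 - x) ^ n) := by gcongr
    _ < (2 * y - 1) * (1 - (1 - y) ^ n) := by
        have : 0 < 2 * y - 1 := by linarith [hx.1]
        gcongr

/-- With `a = (1-q)q^R` and `b = (1-2q)(1-q^R)`, this is twice the numerator of `alpha` minus its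
denominator. -/
noncomputable def alphaGap (a b : ℝ) (L : ℕ) (p : ℝ) : ℝ :=
  a * ((2 * p - 1) * (1 - (1 - p) ^ L)) - b * (p * (1 - p) ^ L)

section alphaGap

variable {a b : ℝ} {L : ℕ}

theorem continuous_alphaGap : Continuous (alphaGap a b L) := by
  unfold alphaGap; fun_prop

theorem alphaGap_one (hL : L ≠ 0) : alphaGap a b L 1 = a := by
  simp [alphaGap, zero_pow hL]
  norm_num

theorem alphaGap_neg_of_le_half (ha : 0 ≤ a) (hb : 0 < b) {p : ℝ} (hp : p ∈ Ioc 0 (1/2)) :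
    alphaGap a b L p < 0 := by
  have hfirst : (2 * p - 1) * (1 - (1 - p) ^ L) ≤ 0 :=
    mul_nonpos_of_nonpos_of_nonneg (by linarith [hp.2])
      (sub_nonneg.2 (pow_le_one₀ (by linarith [hp.2]) (by linarith [hp.1])))
  have hsecond : 0 < p * (1 - p) ^ L := mul_pos hp.1 (pow_pos (by linarith [hp.2]) L)
  unfold alphaGap
  nlinarith [mul_nonpos_of_nonneg_of_nonpos ha hfirst, mul_pos hb hsecond]

theorem alphaGap_strictMonoOn (ha : 0 < a) (hb : 0 ≤ b) (hL : L ≠ 0) :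
    StrictMonoOn (alphaGap a b L) (Icc (1/2) 1) := by
  intro x hx y hy hxy
  have hfirst := mul_lt_mul_of_pos_left
    (strictMonoOn_two_mul_sub_one_mul_one_sub_pow hL hx hy hxy) ha
  have hsecond := mul_le_mul_of_nonneg_left (antitoneOn_mul_one_sub_pow hL hx hy hxy.le) hb
  dsimp only at hfirst hsecond
  unfold alphaGap
  linarith

end alphaGap

theorem sign_alpha_sub_half {p q : ℝ} {R L : ℕ} (hp : p ∈ Ioo 0 1) (hq : q ∈ Ioo 0 1)
    (hL : L ≠ 0) :
    SignType.sign (alpha p q R L - 1/2) =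
      SignType.sign (alphaGap ((1 - q) * q ^ R) ((1 - 2 * q) * (1 - q ^ R)) L p) := by
  have hpL : 0 < (1 - p) ^ L := pow_pos (by linarith [hp.2]) L
  have hden : 0 < (1-q) * q^R * (1 - (1-p)^L) + p * (1-p)^L * (1 - q^R) := by
    have h1 : 0 < (1-q) * q^R * (1 - (1-p)^L) :=
      mul_pos (mul_pos (by linarith [hq.2]) (pow_pos hq.1 R))
        (sub_pos.2 (pow_lt_one₀ (by linarith [hp.2]) (by linarith [hp.1]) hL))
    have h2 : 0 ≤ p * (1-p)^L * (1 - q^R) :=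
      mul_nonneg (mul_pos hp.1 hpL).le (sub_nonneg.2 (pow_le_one₀ hq.1.le hq.2.le))
    linarith
  have hsub : alpha p q R L - 1/2 =
      alphaGap ((1 - q) * q ^ R) ((1 - 2 * q) * (1 - q ^ R)) L p /
        (2 * ((1-q) * q^R * (1 - (1-p)^L) + p * (1-p)^L * (1 - q^R))) := by
    rw [alpha, alphaGap]
    field_simp
    ring
  rw [hsub, div_eq_mul_inv, sign_mul, sign_pos (by positivity : (0:ℝ) < _⁻¹), mul_one]

theorem stmt1 (q : ℝ) (R L : ℕ) (hq : q ∈ Set.Ioo (0:ℝ) (1/2))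
    (hR : 1 ≤ R) (hL : 1 ≤ L) :
    ∃ p₀ ∈ Set.Ioo (1/2 : ℝ) 1,
      alpha p₀ q R L = 1/2 ∧
      (∀ p ∈ Set.Ioo (0:ℝ) 1, p < p₀ → alpha p q R L < 1/2) ∧
      (∀ p ∈ Set.Ioo (0:ℝ) 1, p₀ < p → 1/2 < alpha p q R L) ∧
      (∀ p₀' ∈ Set.Ioo (1/2 : ℝ) 1, alpha p₀' q R L = 1/2 → p₀' = p₀) := by
  obtain ⟨hq0, hq2⟩ := hq
  have hq1 : q ∈ Ioo 0 1 := ⟨hq0, by linarith⟩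
  have hL0 : L ≠ 0 := by omega
  have ha : 0 < (1 - q) * q ^ R := mul_pos (by linarith) (pow_pos hq0 R)
  have hb : 0 < (1 - 2 * q) * (1 - q ^ R) :=
    mul_pos (by linarith) (sub_pos.2 (pow_lt_one₀ hq0.le hq1.2 (by omega)))
  obtain ⟨p₀, hp₀, hroot, hbelow, habove⟩ :=
    exists_sign_change_of_strictMonoOn (c := 0) (by norm_num) (by norm_num)
      continuous_alphaGap.continuousOn (alphaGap_strictMonoOn ha hb.le hL0)
      (fun p hp => alphaGap_neg_of_le_half ha.le hb hp) (by rwa [alphaGap_one hL0])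
  have hsign := fun p (hp : p ∈ Ioo (0:ℝ) 1) => sign_alpha_sub_half (R := R) hp hq1 hL0
  have hlt : ∀ p ∈ Ioo (0:ℝ) 1, p < p₀ → alpha p q R L < 1/2 := fun p hp h => by
    have := hsign p hp
    rwa [sign_eq_neg_one_iff.2 (hbelow p (Ioo_subset_Ioc_self hp) h), sign_eq_neg_one_iff,
      sub_neg] at this
  have hgt : ∀ p ∈ Ioo (0:ℝ) 1, p₀ < p → 1/2 < alpha p q R L := fun p hp h => by
    have := hsign p hp
    rwa [sign_eq_one_iff.2 (habove p (Ioo_subset_Ioc_self hp) h), sign_eq_one_iff,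
      sub_pos] at this
  have hp₀' : p₀ ∈ Ioo (0:ℝ) 1 := ⟨by linarith [hp₀.1], hp₀.2⟩
  refine ⟨p₀, hp₀, ?_, hlt, hgt, fun p hp he => ?_⟩
  · have := hsign p₀ hp₀'
    rwa [hroot, sign_zero, sign_eq_zero_iff, sub_eq_zero] at this
  · have hp' : p ∈ Ioo (0:ℝ) 1 := ⟨by linarith [hp.1], hp.2⟩
    rcases lt_trichotomy p p₀ with h | h | h
    · exact absurd he (hlt p hp' h).ne
    · exact h
    · exact absurd he (hgt p hp' h).ne'
end

section
/- Let q ∈ (0,1/2), L = 1, and R ≥ 1 an integer. Then p₀ := (1 - 2q + q^(R+1))/(1 - 2q + q^R) is the unique point in (0,1) with α(p₀,q,R,1) = 1/2, where α is as defined; moreover α(p) < 1/2 for p < p₀ and α(p) > 1/2 for p > p₀. -/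
open Set

noncomputable def criticalProb (q : ℝ) (R : ℕ) : ℝ :=
  (1 - 2*q + q^(R+1)) / (1 - 2*q + q^R)

section

variable {p q : ℝ} {R : ℕ}

lemma alpha_one_eq (hp : p ≠ 0) :
    alpha p q R 1 =
      ((1-q) * q^R * p + q * (1-q^R) * (1-p)) / ((1-q) * q^R + (1-q^R) * (1-p)) := by
  rw [alpha, ← mul_div_mul_left ((1-q) * q^R * p + q * (1-q^R) * (1-p)) _ hp]
  congr 1 <;> ring

lemma alpha_one_denom_pos (hq0 : 0 < q) (hq1 : q < 1) (hp : p ≤ 1) :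
    0 < (1-q) * q^R + (1-q^R) * (1-p) := by
  have hqR : q^R ≤ 1 := pow_le_one₀ hq0.le hq1.le
  have : 0 < (1-q) * q^R := mul_pos (by linarith) (pow_pos hq0 R)
  nlinarith

lemma criticalProb_denom_pos (hq : q ∈ Ioo 0 (1/2)) : 0 < 1 - 2*q + q^R := by
  have := pow_pos hq.1 R
  linarith [hq.2]

lemma criticalProb_mem_Ioo (hq : q ∈ Ioo 0 (1/2)) : criticalProb q R ∈ Ioo 0 1 := by
  have hD := criticalProb_denom_pos (R := R) hq
  have hqR : q^(R+1) < q^R := pow_lt_pow_right_of_lt_one₀ hq.1 (by linarith [hq.2]) R.lt_succ_self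
  have := pow_pos hq.1 (R+1)
  exact ⟨div_pos (by linarith [hq.2]) hD, (div_lt_one hD).2 (by linarith)⟩

lemma alpha_one_sub_half (hq : q ∈ Ioo 0 (1/2)) (hp : p ∈ Ioc 0 1) :
    alpha p q R 1 - 1/2 =
      (1 - 2*q + q^R) / (2 * ((1-q) * q^R + (1-q^R) * (1-p))) * (p - criticalProb q R) := by
  have hE := alpha_one_denom_pos (R := R) hq.1 (by linarith [hq.2]) hp.2
  have hD := criticalProb_denom_pos (R := R) hq
  rw [alpha_one_eq hp.1.ne', criticalProb]
  set D := 1 - 2*q + q^R with hD_def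
  set E := (1-q) * q^R + (1-q^R) * (1-p) with hE_def
  field_simp
  rw [hD_def, hE_def]
  ring

lemma exists_pos_alpha_one_sub_half (hq : q ∈ Ioo 0 (1/2)) (hp : p ∈ Ioc 0 1) :
    ∃ c > 0, alpha p q R 1 - 1/2 = c * (p - criticalProb q R) :=
  ⟨_, div_pos (criticalProb_denom_pos hq)
    (mul_pos two_pos (alpha_one_denom_pos hq.1 (by linarith [hq.2]) hp.2)),
    alpha_one_sub_half hq hp⟩

lemma alpha_one_lt_half_iff (hq : q ∈ Ioo 0 (1/2)) (hp : p ∈ Ioc 0 1) :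
    alpha p q R 1 < 1/2 ↔ p < criticalProb q R := by
  obtain ⟨c, hc, h⟩ := exists_pos_alpha_one_sub_half (R := R) hq hp
  rw [← sub_neg, h, ← sub_neg (a := p)]
  simpa using mul_lt_mul_iff_right₀ (b := p - criticalProb q R) (c := 0) hc

lemma half_lt_alpha_one_iff (hq : q ∈ Ioo 0 (1/2)) (hp : p ∈ Ioc 0 1) :
    1/2 < alpha p q R 1 ↔ criticalProb q R < p := by
  obtain ⟨c, hc, h⟩ := exists_pos_alpha_one_sub_half (R := R) hq hp
  rw [← sub_pos, h, ← sub_pos (b := criticalProb q R)]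
  exact mul_pos_iff_of_pos_left hc

lemma alpha_one_eq_half_iff (hq : q ∈ Ioo 0 (1/2)) (hp : p ∈ Ioc 0 1) :
    alpha p q R 1 = 1/2 ↔ p = criticalProb q R := by
  obtain ⟨c, hc, h⟩ := exists_pos_alpha_one_sub_half (R := R) hq hp
  rw [← sub_eq_zero, h, ← sub_eq_zero (a := p)]
  exact mul_eq_zero_iff_left hc.ne'

end

theorem stmt3_general (q : ℝ) (R : ℕ) (hq : q ∈ Set.Ioo (0:ℝ) (1/2)) :
    (1 - 2*q + q^(R+1)) / (1 - 2*q + q^R) ∈ Set.Ioo (0:ℝ) 1 ∧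
    alpha ((1 - 2*q + q^(R+1)) / (1 - 2*q + q^R)) q R 1 = 1/2 ∧
    (∀ p ∈ Set.Ioo (0:ℝ) 1,
      p < (1 - 2*q + q^(R+1)) / (1 - 2*q + q^R) → alpha p q R 1 < 1/2) ∧
    (∀ p ∈ Set.Ioo (0:ℝ) 1,
      (1 - 2*q + q^(R+1)) / (1 - 2*q + q^R) < p → 1/2 < alpha p q R 1) ∧
    (∀ p ∈ Set.Ioo (0:ℝ) 1,
      alpha p q R 1 = 1/2 → p = (1 - 2*q + q^(R+1)) / (1 - 2*q + q^R)) := by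
  have hp₀ := criticalProb_mem_Ioo (R := R) hq
  refine ⟨hp₀, (alpha_one_eq_half_iff hq (Ioo_subset_Ioc_self hp₀)).2 rfl, ?_, ?_, ?_⟩
  · exact fun p hp => (alpha_one_lt_half_iff hq (Ioo_subset_Ioc_self hp)).2
  · exact fun p hp => (half_lt_alpha_one_iff hq (Ioo_subset_Ioc_self hp)).2
  · exact fun p hp => (alpha_one_eq_half_iff hq (Ioo_subset_Ioc_self hp)).1

theorem stmt3 (q : ℝ) (R : ℕ) (hq : q ∈ Set.Ioo (0:ℝ) (1/2)) (hR : 1 ≤ R) :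
    (1 - 2*q + q^(R+1)) / (1 - 2*q + q^R) ∈ Set.Ioo (0:ℝ) 1 ∧
    alpha ((1 - 2*q + q^(R+1)) / (1 - 2*q + q^R)) q R 1 = 1/2 ∧
    (∀ p ∈ Set.Ioo (0:ℝ) 1,
      p < (1 - 2*q + q^(R+1)) / (1 - 2*q + q^R) → alpha p q R 1 < 1/2) ∧
    (∀ p ∈ Set.Ioo (0:ℝ) 1,
      (1 - 2*q + q^(R+1)) / (1 - 2*q + q^R) < p → 1/2 < alpha p q R 1) ∧
    (∀ p ∈ Set.Ioo (0:ℝ) 1,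
      alpha p q R 1 = 1/2 → p = (1 - 2*q + q^(R+1)) / (1 - 2*q + q^R)) :=
  stmt3_general q R hq
end

section
/- Let q ∈ (0,1), q > 1/2, L = 1, and R ≥ 1 an integer. If 1 - 2q + q^(R+1) ≤ 0, then α(p,q,R,1) > 1/2 for all p ∈ (0,1). -/
theorem stmt4 (q : ℝ) (R : ℕ) (hq : q ∈ Set.Ioo (0:ℝ) 1) (hq2 : 1/2 < q)
    (hR : 1 ≤ R) (hcond : 1 - 2*q + q^(R+1) ≤ 0) :
    ∀ p ∈ Set.Ioo (0:ℝ) 1, 1/2 < alpha p q R 1 := by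
  obtain ⟨hq0, hq1⟩ := hq
  intro p hp
  obtain ⟨hp0, hp1⟩ := hp
  have hqR0 : 0 < q^R := pow_pos hq0 R
  have hqR1 : q^R < 1 := pow_lt_one₀ hq0.le hq1 (by omega)
  have hpow : q^(R+1) = q^R * q := by ring
  rw [hpow] at hcond
  unfold alpha
  rw [pow_one]
  have hD : 0 < (1-q) * q^R * (1 - (1-p)) + p * (1-p) * (1 - q^R) := by
    have h1 : 0 < (1-q) * q^R * (1 - (1-p)) := by
      apply mul_pos (mul_pos (by linarith) hqR0); linarith
    have h2 : 0 < p * (1-p) * (1 - q^R) := by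
      apply mul_pos (mul_pos hp0 (by linarith)); linarith
    linarith
  rw [lt_div_iff₀ hD]
  nlinarith [mul_pos hp0 (mul_pos (mul_pos (sub_pos.mpr hq1) hqR0) hp0),
    mul_nonneg (mul_nonneg hp0.le (sub_pos.mpr hp1).le) (neg_nonneg.mpr hcond),
    mul_pos hp0 (sub_pos.mpr hp1)]
end

section
/- Let p,q ∈ (0,1) and R,L ≥ 1 be integers. Define the probability vector π on the state set Λ = {(p,0),...,(p,L-1),(q,0),...,(q,R-1)} by π_{(p,i)} = D⁻¹ · p(1-q)q^R (1-p)^i for 0 ≤ i ≤ L-1 and π_{(q,i)} = D⁻¹ · p(1-q)(1-p)^L q^i for 0 ≤ i ≤ R-1, where D = (1-q)q^R(1-(1-p)^L) + p(1-p)^L(1-q^R). Then π is the stationary distribution of the Markov chain on Λ with transitions: from (p,i), go to (p,0) with probability p and to (p,i+1) (or (q,0) if i = L-1) with probability 1-p; from (q,i), go to (q,0) with probability 1-q and to (q,i+1) (or (p,0) if i = R-1) with probability q. That is, π M = π and the entries of π sum to 1. -/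
/-- Transition matrix of the single site Markov chain on
`Fin L ⊕ Fin R`, where `Sum.inl i` represents the configuration `(p,i)`
and `Sum.inr i` represents `(q,i)`. -/
noncomputable def siteM (p q : ℝ) (R L : ℕ) :
    (Fin L ⊕ Fin R) → (Fin L ⊕ Fin R) → ℝ
  | Sum.inl i, Sum.inl j =>
      (if j.val = 0 then p else 0) + (if i.val + 1 = j.val then 1 - p else 0)
  | Sum.inl i, Sum.inr j => if i.val = L - 1 ∧ j.val = 0 then 1 - p else 0
  | Sum.inr i, Sum.inl j => if i.val = R - 1 ∧ j.val = 0 then q else 0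
  | Sum.inr i, Sum.inr j =>
      (if j.val = 0 then 1 - q else 0) + (if i.val + 1 = j.val then q else 0)

/-- The claimed stationary distribution `π`. -/
noncomputable def sitePi (p q : ℝ) (R L : ℕ) : (Fin L ⊕ Fin R) → ℝ
  | Sum.inl i =>
      ((1-q) * q^R * (1 - (1-p)^L) + p * (1-p)^L * (1 - q^R))⁻¹ *
        (p * (1-q) * q^R * (1-p)^i.val)
  | Sum.inr i =>
      ((1-q) * q^R * (1 - (1-p)^L) + p * (1-p)^L * (1 - q^R))⁻¹ *
        (p * (1-q) * (1-p)^L * q^i.val)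

-- helper lemmas
lemma sum_ite_fin (n m : ℕ) (hm : m < n) (c : Fin n → ℝ) :
    ∑ i : Fin n, (if (i : ℕ) = m then c i else 0) = c ⟨m, hm⟩ := by
  have h : ∀ i : Fin n, (if (i:ℕ) = m then c i else 0)
      = (if i = ⟨m,hm⟩ then c i else 0) := by
    intro i; congr 1; simp [Fin.ext_iff]
  simp only [h]
  simp

lemma fin_sum_pow (n : ℕ) (x : ℝ) (hx : x ≠ 1) :
    ∑ i : Fin n, x ^ (i : ℕ) = (x ^ n - 1) / (x - 1) := by
  rw [Fin.sum_univ_eq_sum_range]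
  exact geom_sum_eq hx n


theorem stmt7 (p q : ℝ) (R L : ℕ) (hp : p ∈ Set.Ioo (0:ℝ) 1)
    (hq : q ∈ Set.Ioo (0:ℝ) 1) (hR : 1 ≤ R) (hL : 1 ≤ L) :
    (∀ s : Fin L ⊕ Fin R,
      ∑ s' : Fin L ⊕ Fin R, sitePi p q R L s' * siteM p q R L s' s
        = sitePi p q R L s) ∧
    (∑ s : Fin L ⊕ Fin R, sitePi p q R L s = 1) := by
  obtain ⟨hp0, hp1⟩ := hp
  obtain ⟨hq0, hq1⟩ := hq
  obtain ⟨L', rfl⟩ : ∃ L', L = L' + 1 := ⟨L - 1, by omega⟩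
  obtain ⟨R', rfl⟩ : ∃ R', R = R' + 1 := ⟨R - 1, by omega⟩
  have hpL : (1-p)^(L'+1) < 1 := pow_lt_one₀ (by linarith) (by linarith) (by omega)
  have hpLpos : (0:ℝ) < (1-p)^(L'+1) := pow_pos (by linarith) _
  have hqR : q^(R'+1) < 1 := pow_lt_one₀ (by linarith) hq1 (by omega)
  have hqRpos : (0:ℝ) < q^(R'+1) := pow_pos hq0 _
  have hD : (0:ℝ) < (1-q) * q^(R'+1) * (1 - (1-p)^(L'+1))
      + p * (1-p)^(L'+1) * (1 - q^(R'+1)) := by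
    have h1 : (0:ℝ) < (1-q) * q^(R'+1) * (1 - (1-p)^(L'+1)) :=
      mul_pos (mul_pos (by linarith) hqRpos) (by linarith)
    have h2 : (0:ℝ) < p * (1-p)^(L'+1) * (1 - q^(R'+1)) :=
      mul_pos (mul_pos hp0 hpLpos) (by linarith)
    linarith
  have hD0 := hD.ne'
  have hpne : (1:ℝ) - p ≠ 1 := by intro h; apply hp0.ne'; linarith
  have hqne : q ≠ 1 := hq1.ne
  constructor
  · rintro (⟨jv, hjv⟩ | ⟨jv, hjv⟩)
    · rw [Fintype.sum_sum_type]
      simp only [sitePi, siteM, Nat.add_sub_cancel]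
      cases jv with
      | zero =>
          simp only [Nat.succ_ne_zero, if_false, eq_self_iff_true, if_true, and_true,
            add_zero, mul_ite, mul_zero]
          rw [sum_ite_fin (R'+1) R' (by omega), ← Finset.sum_mul,
            ← Finset.mul_sum, ← Finset.mul_sum, fin_sum_pow _ _ hpne]
          have e1 : (1:ℝ) - p - 1 = -p := by ring
          rw [e1]
          simp only [Fin.val_mk]
          field_simp [hD0]
          ring
      | succ k =>
          simp only [Nat.succ_ne_zero, if_false, and_false, add_zero, zero_add,
            mul_zero, add_left_inj, mul_ite, mul_zero, Finset.sum_const_zero]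
          rw [sum_ite_fin (L'+1) k (by omega)]
          ring
    · rw [Fintype.sum_sum_type]
      simp only [sitePi, siteM, Nat.add_sub_cancel]
      cases jv with
      | zero =>
          simp only [Nat.succ_ne_zero, if_false, eq_self_iff_true, if_true, and_true,
            add_zero, mul_ite, mul_zero]
          rw [sum_ite_fin (L'+1) L' (by omega), ← Finset.sum_mul,
            ← Finset.mul_sum, ← Finset.mul_sum, fin_sum_pow _ _ hqne]
          simp only [Fin.val_mk]
          field_simp [hD0, sub_ne_zero_of_ne hqne]
          ring
      | succ k =>
          simp only [Nat.succ_ne_zero, if_false, and_false, add_zero, zero_add,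
            mul_zero, add_left_inj, mul_ite, mul_zero, Finset.sum_const_zero]
          rw [sum_ite_fin (R'+1) k (by omega)]
          ring
  · rw [Fintype.sum_sum_type]
    simp only [sitePi]
    rw [← Finset.mul_sum, ← Finset.mul_sum, ← Finset.mul_sum, ← Finset.mul_sum,
      fin_sum_pow _ _ hpne, fin_sum_pow _ _ hqne]
    have e1 : (1:ℝ) - p - 1 = -p := by ring
    rw [e1]
    field_simp [hD0, sub_ne_zero_of_ne hqne]
    ring
end

section
/- With π the stationary distribution defined above, p·(Σ_{i=0}^{L-1} π_{(p,i)}) + q·(Σ_{i=0}^{R-1} π_{(q,i)}) = α, where α = [p(1-q)q^R(1-(1-p)^L) + qp(1-p)^L(1-q^R)] / [(1-q)q^R(1-(1-p)^L) + p(1-p)^L(1-q^R)]. -/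
theorem stmt8 (p q : ℝ) (R L : ℕ) (hp : p ∈ Set.Ioo (0:ℝ) 1)
    (hq : q ∈ Set.Ioo (0:ℝ) 1) (hR : 1 ≤ R) (hL : 1 ≤ L) :
    p * ∑ i ∈ Finset.range L,
        ((1-q) * q^R * (1 - (1-p)^L) + p * (1-p)^L * (1 - q^R))⁻¹ *
          (p * (1-q) * q^R * (1-p)^i)
    + q * ∑ i ∈ Finset.range R,
        ((1-q) * q^R * (1 - (1-p)^L) + p * (1-p)^L * (1 - q^R))⁻¹ *
          (p * (1-q) * (1-p)^L * q^i)
    = alpha p q R L := by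
  obtain ⟨hp0, hp1⟩ := hp
  obtain ⟨hq0, hq1⟩ := hq
  have h1p : (0:ℝ) < 1 - p := by linarith
  have h1q : (0:ℝ) < 1 - q := by linarith
  have hpL : (1-p)^L < 1 := pow_lt_one₀ (le_of_lt h1p) (by linarith) (by omega)
  have hqR : q^R < 1 := pow_lt_one₀ (le_of_lt hq0) (by linarith) (by omega)
  have hD : (0:ℝ) < (1-q) * q^R * (1 - (1-p)^L) + p * (1-p)^L * (1 - q^R) := by
    have h1 : (0:ℝ) < (1-q) * q^R * (1 - (1-p)^L) :=
      mul_pos (mul_pos h1q (pow_pos hq0 R)) (by linarith)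
    have h2 : (0:ℝ) < p * (1-p)^L * (1 - q^R) :=
      mul_pos (mul_pos hp0 (pow_pos h1p L)) (by linarith)
    linarith
  simp only [alpha]
  set D : ℝ := (1-q) * q^R * (1 - (1-p)^L) + p * (1-p)^L * (1 - q^R) with hDdef
  have hDne : D ≠ 0 := ne_of_gt hD
  have hgeo1 : ((1-p)^L - 1) / ((1-p) - 1) = (1 - (1-p)^L) * p⁻¹ := by
    rw [← div_eq_mul_inv, div_eq_div_iff (by linarith) (ne_of_gt hp0)]
    ring
  have hgeo2 : (q^R - 1) / (q - 1) = (1 - q^R) * (1-q)⁻¹ := by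
    rw [← div_eq_mul_inv, div_eq_div_iff (by linarith) (ne_of_gt h1q)]
    ring
  have e1 : ∑ i ∈ Finset.range L, D⁻¹ * (p * (1-q) * q^R * (1-p)^i)
      = D⁻¹ * ((1-q) * q^R * (1 - (1-p)^L)) := by
    have h : ∀ i ∈ Finset.range L, D⁻¹ * (p * (1-q) * q^R * (1-p)^i)
        = (D⁻¹ * (p * (1-q) * q^R)) * (1-p)^i := by intro i _; ring
    rw [Finset.sum_congr rfl h, ← Finset.mul_sum,
      geom_sum_eq (by intro h'; nlinarith [h']) L, hgeo1]
    have : D⁻¹ * (p * (1-q) * q^R) * ((1 - (1-p)^L) * p⁻¹)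
        = D⁻¹ * ((1-q) * q^R * (1 - (1-p)^L)) * (p * p⁻¹) := by ring
    rw [this, mul_inv_cancel₀ (ne_of_gt hp0), mul_one]
  have e2 : ∑ i ∈ Finset.range R, D⁻¹ * (p * (1-q) * (1-p)^L * q^i)
      = D⁻¹ * (p * (1-p)^L * (1 - q^R)) := by
    have h : ∀ i ∈ Finset.range R, D⁻¹ * (p * (1-q) * (1-p)^L * q^i)
        = (D⁻¹ * (p * (1-q) * (1-p)^L)) * q^i := by intro i _; ring
    rw [Finset.sum_congr rfl h, ← Finset.mul_sum,
      geom_sum_eq (by intro h'; nlinarith [h']) R, hgeo2]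
    have : D⁻¹ * (p * (1-q) * (1-p)^L) * ((1 - q^R) * (1-q)⁻¹)
        = D⁻¹ * (p * (1-p)^L * (1 - q^R)) * ((1-q) * (1-q)⁻¹) := by ring
    rw [this, mul_inv_cancel₀ (ne_of_gt h1q), mul_one]
  rw [e1, e2, div_eq_mul_inv]
  ring
end

section
/- Let q ∈ (0,1), R ≥ 1 an integer, and set p = (1-2q+q^(R+1))/(1-2q+q^R), assuming 1-2q+q^R ≠ 0 and p ∈ (0,1). With S_i as defined (P(S_i = k) = q^k(1-q) for 0 ≤ k ≤ R-i-1, P(S_i = k) = q^(R-i) p^(k-(R-i))(1-p) for k ≥ R-i), for each 0 ≤ i ≤ R we have E(S_i) = (1 - 2q + q^(i+1))/(q^i (1-q)). -/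
/-!
With `n = R - i`, the law of `S_i` is geometric with ratio `q` below `n` and geometric with
ratio `p` from `n` on. Summing the finite arithmetico-geometric head and the geometric tail gives
`E(S_i) = q (1 - q^n) / (1 - q) + q^n p / (1 - p)`, and the choice of `p` makes
`p / (1 - p) = (1 - 2q + q^(R+1)) / (q^R (1 - q))`, after which `q^R = q^n q^i` collapses the sum.
-/

open Finset

def twoPhaseGeometric (q p : ℝ) (n k : ℕ) : ℝ :=
  if k < n then q ^ k * (1 - q) else q ^ n * p ^ (k - n) * (1 - p)

theorem twoPhaseGeometric_of_lt {q p : ℝ} {n k : ℕ} (hk : k < n) :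
    twoPhaseGeometric q p n k = q ^ k * (1 - q) :=
  if_pos hk

theorem twoPhaseGeometric_add (q p : ℝ) (n j : ℕ) :
    twoPhaseGeometric q p n (j + n) = q ^ n * p ^ j * (1 - p) := by
  rw [twoPhaseGeometric, if_neg (by omega), Nat.add_sub_cancel]

theorem one_sub_mul_sum_range_mul_pow (q : ℝ) (n : ℕ) :
    (1 - q) * (∑ k ∈ range n, k * (q ^ k * (1 - q)) + n * q ^ n) = q * (1 - q ^ n) := by
  induction n with
  | zero => simp
  | succ m ih =>
    rw [sum_range_succ]
    push_cast
    linear_combination ih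

theorem hasSum_mul_twoPhaseGeometric_add {p : ℝ} (hp : ‖p‖ < 1) (q : ℝ) (n : ℕ) :
    HasSum (fun j : ℕ => ((j + n : ℕ) : ℝ) * twoPhaseGeometric q p n (j + n))
      (q ^ n * (p / (1 - p) + n)) := by
  have hp1 : 1 - p ≠ 0 := sub_ne_zero.mpr (ne_of_lt (lt_of_abs_lt hp)).symm
  have hmean : HasSum (fun j : ℕ => (j : ℝ) * p ^ j * (1 - p)) (p / (1 - p)) := by
    have h := (hasSum_coe_mul_geometric_of_norm_lt_one hp).mul_right (1 - p)
    rwa [show p / (1 - p) ^ 2 * (1 - p) = p / (1 - p) by field_simp] at h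
  have hmass : HasSum (fun j : ℕ => p ^ j * (1 - p)) 1 := by
    have h := (hasSum_geometric_of_norm_lt_one hp).mul_right (1 - p)
    rwa [inv_mul_cancel₀ hp1] at h
  have h := (hmean.add (hmass.mul_left (n : ℝ))).mul_left (q ^ n)
  rw [mul_one] at h
  refine h.congr_fun fun j => ?_
  rw [twoPhaseGeometric_add]
  push_cast
  ring

theorem tsum_mul_twoPhaseGeometric {q p : ℝ} (hq : q ≠ 1) (hp : ‖p‖ < 1) (n : ℕ) :
    ∑' k : ℕ, (k : ℝ) * twoPhaseGeometric q p n k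
      = q * (1 - q ^ n) / (1 - q) + q ^ n * (p / (1 - p)) := by
  have htail := hasSum_mul_twoPhaseGeometric_add hp q n
  have hhead : ∑ k ∈ range n, (k : ℝ) * twoPhaseGeometric q p n k
      = q * (1 - q ^ n) / (1 - q) - n * q ^ n := by
    rw [eq_sub_iff_add_eq, eq_div_iff (sub_ne_zero.mpr hq.symm), mul_comm,
      ← one_sub_mul_sum_range_mul_pow]
    congr 2
    exact sum_congr rfl fun k hk => by rw [twoPhaseGeometric_of_lt (mem_range.mp hk)]
  have hsum : Summable fun k : ℕ => (k : ℝ) * twoPhaseGeometric q p n k :=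
    (summable_nat_add_iff n).mp htail.summable
  rw [← hsum.sum_add_tsum_nat_add n, htail.tsum_eq, hhead]
  ring

theorem stmt10_general (q : ℝ) (R i : ℕ) (hq : q ∈ Set.Ioo (0:ℝ) 1)
    (hi : i ≤ R) (hden : 1 - 2*q + q^R ≠ 0)
    (hp : (1 - 2*q + q^(R+1)) / (1 - 2*q + q^R) ∈ Set.Ioo (0:ℝ) 1) :
    ∑' k : ℕ, (k : ℝ) *
        (if k < R - i then q^k * (1-q)
         else q^(R-i) * ((1 - 2*q + q^(R+1)) / (1 - 2*q + q^R))^(k-(R-i)) *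
           (1 - (1 - 2*q + q^(R+1)) / (1 - 2*q + q^R)))
    = (1 - 2*q + q^(i+1)) / (q^i * (1-q)) := by
  obtain ⟨hq0, hq1⟩ := hq
  set p := (1 - 2*q + q^(R+1)) / (1 - 2*q + q^R) with hp_def
  have hp_norm : ‖p‖ < 1 := by rw [Real.norm_eq_abs, abs_of_pos hp.1]; exact hp.2
  have hodds : p / (1 - p) = (1 - 2*q + q^(R+1)) / (q^R * (1 - q)) := by
    rw [hp_def, one_sub_div hden, div_div_div_cancel_right₀ hden]
    ring_nf
  change ∑' k : ℕ, (k : ℝ) * twoPhaseGeometric q p (R - i) k = _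
  rw [tsum_mul_twoPhaseGeometric hq1.ne hp_norm, hodds]
  obtain ⟨n, rfl⟩ := Nat.exists_eq_add_of_le' hi
  rw [Nat.add_sub_cancel]
  have hq_ne : q ≠ 0 := hq0.ne'
  have hq_one : 1 - q ≠ 0 := by linarith
  field_simp
  ring

theorem stmt10 (q : ℝ) (R i : ℕ) (hq : q ∈ Set.Ioo (0:ℝ) 1) (hR : 1 ≤ R)
    (hi : i ≤ R) (hden : 1 - 2*q + q^R ≠ 0)
    (hp : (1 - 2*q + q^(R+1)) / (1 - 2*q + q^R) ∈ Set.Ioo (0:ℝ) 1) :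
    ∑' k : ℕ, (k : ℝ) *
        (if k < R - i then q^k * (1-q)
         else q^(R-i) * ((1 - 2*q + q^(R+1)) / (1 - 2*q + q^R))^(k-(R-i)) *
           (1 - (1 - 2*q + q^(R+1)) / (1 - 2*q + q^R)))
    = (1 - 2*q + q^(i+1)) / (q^i * (1-q)) :=
  stmt10_general q R i hq hi hden hp
end

section
/- Let q ∈ (0,1), R ≥ 1 an integer, and p = (1-2q+q^(R+1))/(1-2q+q^R) with p ∈ (0,1). With S_0 the random variable with P(S_0 = k) = q^k(1-q) for 0 ≤ k ≤ R-1 and P(S_0 = k) = q^R p^(k-R)(1-p) for k ≥ R, one has E(S_0²) = [2 - 8q + 8q² + (2R+1)q^R + (2-6R)q^(R+1) + (4R-5)q^(R+2)] / (q^R (1-q)²). -/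
/-!
If `N` is geometric with ratio `r` (so `P(N = n) = (1 - r) rⁿ`) and mean `m = r / (1 - r)`, then
`E (N + c)² = c² + (2c + 1) m + 2 m²`; this follows by writing `(n + c)²` in the basis
`C(n + k, k)`, whose generating series are `1 / (1 - r)^(k + 1)`. Splitting the series of `S₀`
at `R`, its head is the geometric one minus a shifted geometric tail and its tail is a shifted
geometric series of ratio `p`, so `E S₀² = E N_q² + q^R (E (N_p + R)² - E (N_q + R)²)`.
For the critical `p` the mean `p / (1 - p)` equals `(1 - 2q + q^(R+1)) / (q^R (1 - q))`, and what
remains is algebra.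
-/

open Finset

section

variable {𝕜 : Type*} [NormedField 𝕜]

noncomputable def shiftedGeometricSqMoment (c r : 𝕜) : 𝕜 :=
  c ^ 2 + (2 * c + 1) * (r / (1 - r)) + 2 * (r / (1 - r)) ^ 2

theorem hasSum_add_sq_mul_geometric {r : 𝕜} (hr : ‖r‖ < 1) (c : 𝕜) :
    HasSum (fun n : ℕ ↦ ((n : 𝕜) + c) ^ 2 * ((1 - r) * r ^ n))
      (shiftedGeometricSqMoment c r) := by
  have hr1 : 1 - r ≠ 0 := sub_ne_zero.2 (ne_of_apply_ne norm (by simpa using hr.ne'))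
  -- `(n + c)² = 2 C(n+2, 2) + (2c - 3) C(n+1, 1) + (c - 1)² C(n, 0)`
  have hsq (n : ℕ) : ((n : 𝕜) + c) ^ 2 = 2 * ((n + 2).choose 2 : ℕ)
      + (2 * c - 3) * ((n + 1).choose 1 : ℕ) + (c - 1) ^ 2 * ((n + 0).choose 0 : ℕ) := by
    have h2 : ((n + 2).choose 2 * 2 : ℕ) = (n + 2) * (n + 1) := by
      rw [← Nat.add_one_mul_choose_eq, Nat.choose_one_right]
    have h2' : (((n + 2).choose 2 : ℕ) : 𝕜) * 2 = (n + 2) * (n + 1) := by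
      exact_mod_cast congrArg (Nat.cast : ℕ → 𝕜) h2
    rw [Nat.choose_one_right, Nat.choose_zero_right]
    push_cast
    linear_combination -h2'
  have hsum := (((hasSum_choose_mul_geometric_of_norm_lt_one 2 hr).mul_left 2).add
    (((hasSum_choose_mul_geometric_of_norm_lt_one 1 hr).mul_left (2 * c - 3)).add
      ((hasSum_choose_mul_geometric_of_norm_lt_one 0 hr).mul_left ((c - 1) ^ 2)))).mul_left (1 - r)
  have hval : shiftedGeometricSqMoment c r = (1 - r) * (2 * (1 / (1 - r) ^ 3)
      + ((2 * c - 3) * (1 / (1 - r) ^ 2) + (c - 1) ^ 2 * (1 / (1 - r) ^ 1))) := by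
    unfold shiftedGeometricSqMoment
    field_simp
    ring
  rw [hval]
  exact hsum.congr_fun fun n ↦ by rw [hsq]; ring

theorem sum_range_sq_mul_geometric {r : 𝕜} (hr : ‖r‖ < 1) (R : ℕ) :
    ∑ k ∈ range R, (k : 𝕜) ^ 2 * ((1 - r) * r ^ k)
      = shiftedGeometricSqMoment 0 r - r ^ R * shiftedGeometricSqMoment (R : 𝕜) r := by
  have hfull := (hasSum_nat_add_iff' R).mpr (by simpa using hasSum_add_sq_mul_geometric hr 0)
  have htail := ((hasSum_add_sq_mul_geometric hr R).mul_left (r ^ R)).congr_fun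
    fun n ↦ show ((n + R : ℕ) : 𝕜) ^ 2 * ((1 - r) * r ^ (n + R)) = _ by push_cast; ring
  linear_combination -hfull.unique htail

theorem hasSum_sq_mul_piecewiseGeometric {q p : 𝕜} (hq : ‖q‖ < 1) (hp : ‖p‖ < 1) (R : ℕ) :
    HasSum (fun k : ℕ ↦ (k : 𝕜) ^ 2 *
        (if k < R then q ^ k * (1 - q) else q ^ R * p ^ (k - R) * (1 - p)))
      (shiftedGeometricSqMoment 0 q
        + q ^ R * (shiftedGeometricSqMoment (R : 𝕜) p - shiftedGeometricSqMoment (R : 𝕜) q)) := by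
  rw [← hasSum_nat_add_iff' R]
  have hhead : ∑ k ∈ range R, (k : 𝕜) ^ 2 *
      (if k < R then q ^ k * (1 - q) else q ^ R * p ^ (k - R) * (1 - p))
        = shiftedGeometricSqMoment 0 q - q ^ R * shiftedGeometricSqMoment (R : 𝕜) q := by
    rw [← sum_range_sq_mul_geometric hq R]
    refine sum_congr rfl fun k hk ↦ ?_
    rw [if_pos (mem_range.1 hk), mul_comm (q ^ k)]
  rw [hhead, show ∀ a b c d : 𝕜, a + c * (b - d) - (a - c * d) = c * b from fun a b c d ↦ by ring]
  refine ((hasSum_add_sq_mul_geometric hp R).mul_left (q ^ R)).congr_fun fun n ↦ ?_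
  rw [if_neg (by omega), Nat.add_sub_cancel]
  push_cast
  ring

end

theorem stmt11_general (q : ℝ) (R : ℕ) (hq : q ∈ Set.Ioo (0:ℝ) 1)
    (hden : 1 - 2*q + q^R ≠ 0)
    (hp : (1 - 2*q + q^(R+1)) / (1 - 2*q + q^R) ∈ Set.Ioo (0:ℝ) 1) :
    ∑' k : ℕ, (k : ℝ)^2 *
        (if k < R then q^k * (1-q)
         else q^R * ((1 - 2*q + q^(R+1)) / (1 - 2*q + q^R))^(k-R) *
           (1 - (1 - 2*q + q^(R+1)) / (1 - 2*q + q^R)))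
    = (2 - 8*q + 8*q^2 + (2*(R:ℝ)+1)*q^R + (2-6*(R:ℝ))*q^(R+1)
        + (4*(R:ℝ)-5)*q^(R+2)) / (q^R * (1-q)^2) := by
  have norm_lt_one {x : ℝ} (hx : x ∈ Set.Ioo (0 : ℝ) 1) : ‖x‖ < 1 :=
    (Real.norm_of_nonneg hx.1.le).trans_lt hx.2
  rw [(hasSum_sq_mul_piecewiseGeometric (norm_lt_one hq) (norm_lt_one hp) R).tsum_eq]
  have hq1 : 1 - q ≠ 0 := sub_ne_zero.2 hq.2.ne'
  have hQ : q ^ R ≠ 0 := pow_ne_zero _ hq.1.ne'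
  unfold shiftedGeometricSqMoment
  rw [pow_add q R 2, pow_succ q R]
  generalize q ^ R = Q at hQ hden ⊢
  -- the mean `p / (1 - p)` of the tail
  have hmean : (1 - 2*q + Q * q) / (1 - 2*q + Q) / (1 - (1 - 2*q + Q * q) / (1 - 2*q + Q))
      = (1 - 2*q + Q * q) / (Q * (1 - q)) := by
    rw [one_sub_div hden, div_div_div_cancel_right₀ hden]
    ring
  rw [hmean]
  field_simp
  ring

theorem stmt11 (q : ℝ) (R : ℕ) (hq : q ∈ Set.Ioo (0:ℝ) 1) (hR : 1 ≤ R)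
    (hden : 1 - 2*q + q^R ≠ 0)
    (hp : (1 - 2*q + q^(R+1)) / (1 - 2*q + q^R) ∈ Set.Ioo (0:ℝ) 1) :
    ∑' k : ℕ, (k : ℝ)^2 *
        (if k < R then q^k * (1-q)
         else q^R * ((1 - 2*q + q^(R+1)) / (1 - 2*q + q^R))^(k-R) *
           (1 - (1 - 2*q + q^(R+1)) / (1 - 2*q + q^R)))
    = (2 - 8*q + 8*q^2 + (2*(R:ℝ)+1)*q^R + (2-6*(R:ℝ))*q^(R+1)
        + (4*(R:ℝ)-5)*q^(R+2)) / (q^R * (1-q)^2) :=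
  stmt11_general q R hq hden hp
end

section
/- Let p, q ∈ (0,1) and L ≥ 1 an integer. The unique real solution of the linear system a_i = p + (1-p)(1 + a_0 + a_{i+1}) for 0 ≤ i ≤ L-1 and a_L = q + (1-q)(1 + a_0 + a_L) is given by a_0 = [1 + (p/q - 1)(1-p)^L] / [(2p-1) - (p/q - 1)(1-p)^L] and a_i = [1 + (p/q-1)(1-p)^(L-i)]/p + ([(1-p) + (p/q-1)(1-p)^(L-i)]/p)·a_0 for 1 ≤ i ≤ L, provided (2p-1) - (p/q-1)(1-p)^L ≠ 0. -/
theorem stmt18 (p q : ℝ) (L : ℕ) (hp : p ∈ Set.Ioo (0:ℝ) 1)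
    (hq : q ∈ Set.Ioo (0:ℝ) 1) (hL : 1 ≤ L)
    (hden : (2*p - 1) - (p/q - 1)*(1-p)^L ≠ 0)
    (a : ℕ → ℝ)
    (hsys : ∀ i < L, a i = p + (1-p)*(1 + a 0 + a (i+1)))
    (hsysL : a L = q + (1-q)*(1 + a 0 + a L)) :
    a 0 = (1 + (p/q - 1)*(1-p)^L) / ((2*p - 1) - (p/q - 1)*(1-p)^L) ∧
    ∀ i, 1 ≤ i → i ≤ L →
      a i = (1 + (p/q - 1)*(1-p)^(L-i)) / p
        + (((1-p) + (p/q - 1)*(1-p)^(L-i)) / p) * a 0 := by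
  obtain ⟨hp0, hp1⟩ := hp
  obtain ⟨hq0, hq1⟩ := hq
  have hpne : p ≠ 0 := ne_of_gt hp0
  have hqne : q ≠ 0 := ne_of_gt hq0
  have key : ∀ k, k ≤ L → a (L - k) =
      (1 + (p/q - 1)*(1-p)^k) / p
        + (((1-p) + (p/q - 1)*(1-p)^k) / p) * a 0 := by
    intro k
    induction k with
    | zero =>
      intro _
      simp only [Nat.sub_zero, pow_zero, mul_one]
      field_simp
      linear_combination p * hsysL
    | succ k ih =>
      intro hk
      have hk' : k ≤ L := Nat.le_of_succ_le hk
      have h1 : L - (k+1) < L := by omega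
      have h2 : L - (k+1) + 1 = L - k := by omega
      have h3 := hsys (L - (k+1)) h1
      rw [h2] at h3
      rw [ih hk'] at h3
      rw [h3]
      field_simp
      ring
  have h0 := key L le_rfl
  simp only [Nat.sub_self] at h0
  have ha0 : a 0 = (1 + (p/q - 1)*(1-p)^L) / ((2*p - 1) - (p/q - 1)*(1-p)^L) := by
    rw [eq_div_iff hden]
    have h0' := h0
    field_simp at h0' ⊢
    linear_combination h0'
  refine ⟨ha0, ?_⟩
  intro i h1i hiL
  have := key (L - i) (Nat.sub_le L i)
  have h4 : L - (L - i) = i := by omega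
  rw [h4] at this
  exact this
end

section
/- Let R = L = 1 and p + q > 1 with p,q ∈ (0,1). With a_0 and a_1 given by a_0 = [1 + (p/q-1)(1-p)] / [(2p-1) - (p/q-1)(1-p)] and a_1 = [1 + (p/q-1)]/p + ([(1-p) + (p/q-1)]/p)a_0, and with d ∈ [0,1], the quantity s := 1/(d·a_0 + (1-d)·a_1) satisfies s = (p+q-1) / (1 + (1-2d)(p-q)). In particular s is invariant under the simultaneous interchange p ↔ q, d ↔ 1-d. -/
theorem stmt19 (p q d : ℝ) (hp : p ∈ Set.Ioo (0:ℝ) 1) (hq : q ∈ Set.Ioo (0:ℝ) 1)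
    (hpq : 1 < p + q) (hd : d ∈ Set.Icc (0:ℝ) 1) :
    1 / (d * ((1 + (p/q - 1)*(1-p)) / ((2*p - 1) - (p/q - 1)*(1-p)))
          + (1-d) * ((1 + (p/q - 1)) / p
              + (((1-p) + (p/q - 1)) / p)
                * ((1 + (p/q - 1)*(1-p)) / ((2*p - 1) - (p/q - 1)*(1-p)))))
      = (p + q - 1) / (1 + (1 - 2*d)*(p - q)) ∧
    (p + q - 1) / (1 + (1 - 2*d)*(p - q))
      = (q + p - 1) / (1 + (1 - 2*(1-d))*(q - p)) := by
  obtain ⟨hp0, hp1⟩ := hp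
  obtain ⟨hq0, hq1⟩ := hq
  obtain ⟨hd0, hd1⟩ := hd
  have hpq1 : p + q - 1 ≠ 0 := by linarith
  have hqne : q ≠ 0 := ne_of_gt hq0
  have hpne : p ≠ 0 := ne_of_gt hp0
  have ha0 : (1 + (p/q - 1)*(1-p)) / ((2*p - 1) - (p/q - 1)*(1-p))
      = (1 + q - p) / (p + q - 1) := by
    have hnum : 1 + (p/q - 1)*(1-p) = p*(1 + q - p)/q := by field_simp; ring
    have hden : (2*p - 1) - (p/q - 1)*(1-p) = p*(p + q - 1)/q := by field_simp; ring
    rw [hnum, hden]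
    rw [div_div_div_eq]
    rw [div_eq_div_iff (by positivity) hpq1]
    ring
  rw [ha0]
  have ha1 : (1 + (p/q - 1)) / p
      + (((1-p) + (p/q - 1)) / p) * ((1 + q - p) / (p + q - 1))
      = (1 + p - q) / (p + q - 1) := by
    field_simp
    ring
  rw [ha1]
  have hX : d * ((1 + q - p) / (p + q - 1)) + (1-d) * ((1 + p - q) / (p + q - 1))
      = (1 + (1 - 2*d)*(p - q)) / (p + q - 1) := by
    field_simp
    ring
  rw [hX, one_div_div]
  refine ⟨rfl, ?_⟩
  have h1 : (1 + (1 - 2*d)*(p - q)) = (1 + (1 - 2*(1-d))*(q - p)) := by ring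
  rw [h1, show p + q - 1 = q + p - 1 by ring]
end
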